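/- If w is a cyclically reduced word containing no occurrence of a_i^{±1} and w' is a cyclic conjugate of w, then |w|_i^simple − 1 ≤ |w'|_i^simple ≤ |w|_i^simple + 1. -/

import Mathlib

/-!
Cut a maximal decomposition of `p ++ q` into simple pieces at the end of `p`: at most one piece
is split, and its two halves can be glued onto the first and last pieces of the rotated word
`q ++ p`. Enlarging a word only adds edges to its Whitehead graph, on a fixed vertex set, and
adding edges cannot create a cut vertex, so the glued pieces are still simple. Hence
`|p q| ≤ |q p| + 1`, and the theorem follows by symmetry.
-/

namespace ESPaper

/-- A letter of the free group `F_n` over the standard basis: a generator index and a sign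
    (`true` = the generator, `false` = its inverse). -/
abbrev Ltr (n : ℕ) := Fin n × Bool

/-- A word over the standard basis and its inverses. -/
abbrev Wrd (n : ℕ) := List (Ltr n)

/-- The inverse of a letter. -/
def linv {n : ℕ} (c : Ltr n) : Ltr n := (c.1, !c.2)

/-- The (formal) inverse of a word. -/
def winv {n : ℕ} (w : Wrd n) : Wrd n := w.reverse.map linv

/-- `w` is freely reduced: no two consecutive letters are inverse to each other. -/
def Reduced {n : ℕ} (w : Wrd n) : Prop := List.Chain' (fun a b => b ≠ linv a) w

/-- `w` is cyclically reduced. -/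
def CyclicallyReduced {n : ℕ} (w : Wrd n) : Prop := Reduced (w ++ w)

/-- `w` contains no occurrence of `a_i^{±1}`. -/
def Avoids {n : ℕ} (i : Fin n) (w : Wrd n) : Prop := ∀ c ∈ w, c.1 ≠ i

/-- `w` is a positive word (no inverse letters). -/
def Positive {n : ℕ} (w : Wrd n) : Prop := ∀ c ∈ w, c.2 = true

/-- Vertices of the Whitehead graph over `a ∖ {a_i}`: all letters whose index is not `i`. -/
def WVert (n : ℕ) (i : Fin n) := {c : Ltr n // c.1 ≠ i}

/-- The Whitehead graph `Γ_{a∖{a_i}}(w)`: for each pair of consecutive letters `bc` of `w`,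
    an edge from `b` to `c⁻¹`. -/
def WGraph {n : ℕ} (i : Fin n) (w : Wrd n) : SimpleGraph (WVert n i) where
  Adj x y := x ≠ y ∧ ∃ p ∈ w.zip w.tail,
    (x.1 = p.1 ∧ y.1 = linv p.2) ∨ (y.1 = p.1 ∧ x.1 = linv p.2)
  symm := ⟨by
    rintro x y ⟨hne, p, hp, h⟩
    exact ⟨hne.symm, p, hp, h.symm⟩⟩
  loopless := ⟨fun x h => h.1 rfl⟩

/-- A graph has a cut vertex `v` if it is the union of two subgraphs, each with a vertex
    other than `v`, which intersect exactly in `v`.  (A disconnected graph on at least three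
    vertices automatically has a cut vertex in this sense.) -/
def HasCutVertex {V : Type*} (G : SimpleGraph V) : Prop :=
  ∃ (v : V) (H₁ H₂ : G.Subgraph),
    H₁ ⊔ H₂ = ⊤ ∧ H₁.verts ∩ H₂.verts = {v} ∧ H₁.verts ≠ {v} ∧ H₂.verts ≠ {v}

/-- The simple `i`-length of a word `w` (containing no `a_i^{±1}`): the greatest `t` such
    that `w = w_1 ⋯ w_t` where no Whitehead graph `Γ_{a∖{a_i}}(w_j)` has a cut vertex
    (`0` if there is no such decomposition, in particular if `Γ_{a∖{a_i}}(w)` has a cut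
    vertex). -/
noncomputable def simpleLen {n : ℕ} (i : Fin n) (w : Wrd n) : ℕ :=
  sSup {t | ∃ ps : List (Wrd n), ps.length = t ∧ ps.flatten = w ∧
      ∀ p ∈ ps, p ≠ [] ∧ ¬ HasCutVertex (WGraph i p)}

/-- The conjugate reduced `i`-length of `w`: the minimum over all decompositions
    `w =_r v_1^{u_1} ⋯ v_l^{u_l}` (equality in the free group, `v^u = u⁻¹ v u`) of
    `(l - 1) + Σ_j |v_j|_i^simple`. -/
noncomputable def crLen {n : ℕ} (i : Fin n) (w : Wrd n) : ℕ :=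
  sInf {k | ∃ vs us : List (Wrd n), vs ≠ [] ∧ us.length = vs.length ∧
      (∀ v ∈ vs, Reduced v ∧ Avoids i v) ∧
      FreeGroup.mk w =
        ((vs.zip us).map fun p => (FreeGroup.mk p.2)⁻¹ * FreeGroup.mk p.1 * FreeGroup.mk p.2).prod ∧
      k = (vs.length - 1) + (vs.map (simpleLen i)).sum}

/-- One step of cyclic reduction: cancel the first against the last letter if possible. -/
def stripOnce {n : ℕ} : Wrd n → Wrd n
  | [] => []
  | a :: rest => if rest.getLast? = some (linv a) then rest.dropLast else a :: rest

/-- Cyclic reduction of a (reduced) word. -/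
def cyclicReduce {n : ℕ} (w : Wrd n) : Wrd n := stripOnce^[w.length] w

/-- `u` cyclically precedes position `p` in the cyclic word `v`. -/
def CycPrec {n : ℕ} (v : Wrd n) (p : ℕ) (u : Wrd n) : Prop :=
  u <:+ (v ++ v).take (v.length + p)

/-- `u` cyclically follows position `p` in the cyclic word `v`. -/
def CycFoll {n : ℕ} (v : Wrd n) (p : ℕ) (u : Wrd n) : Prop :=
  u <+: (v ++ v).drop (p + 1)

/-- `u` cyclically precedes every occurrence of `a_i` (and `u⁻¹` cyclically follows every
    occurrence of `a_i⁻¹`) in the cyclic reductions of the words of `Y`. -/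
def IsPrecWord {n : ℕ} (i : Fin n) (Y : List (Wrd n)) (u : Wrd n) : Prop :=
  Avoids i u ∧ ∀ y ∈ Y, ∀ p < (cyclicReduce y).length,
    ((cyclicReduce y)[p]? = some (i, true) → CycPrec (cyclicReduce y) p u) ∧
    ((cyclicReduce y)[p]? = some (i, false) → CycFoll (cyclicReduce y) p (winv u))

open scoped Classical in
/-- The word `w_L(Y)`: a longest word cyclically preceding every occurrence of `a_i`
    in the cyclic reductions of the words of `Y` (trivial if there is no longest one). -/
noncomputable def wL {n : ℕ} (i : Fin n) (Y : List (Wrd n)) : Wrd n :=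
  if h : ∃ u, IsPrecWord i Y u ∧ ∀ u', IsPrecWord i Y u' → u'.length ≤ u.length
  then h.choose else []

/-- The set of cyclic positions of `v` occupied by the occurrences of a preceding word of
    length `len` around the occurrences of `a_i^{±1}`. -/
def LOcc {n : ℕ} (i : Fin n) (len : ℕ) (v : Wrd n) : Set ℕ :=
  {t | ∃ p k, p < v.length ∧ k < len ∧
    ((v[p]? = some (i, true) ∧ t = (p + v.length - 1 - k) % v.length) ∨
     (v[p]? = some (i, false) ∧ t = (p + 1 + k) % v.length))}

/-- The set of cyclic positions of `v` occupied by the occurrences of a following word of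
    length `len` around the occurrences of `a_i^{±1}`. -/
def ROcc {n : ℕ} (i : Fin n) (len : ℕ) (v : Wrd n) : Set ℕ :=
  {t | ∃ p k, p < v.length ∧ k < len ∧
    ((v[p]? = some (i, true) ∧ t = (p + 1 + k) % v.length) ∨
     (v[p]? = some (i, false) ∧ t = (p + v.length - 1 - k) % v.length))}

/-- `u` cyclically follows every occurrence of `a_i` (and `u⁻¹` precedes every `a_i⁻¹`)
    in the cyclic reductions of the words of `Y`, with no occurrence of `u` intersecting an
    occurrence of `w_L(Y)`. -/
def IsFolWord {n : ℕ} (i : Fin n) (Y : List (Wrd n)) (u : Wrd n) : Prop :=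
  Avoids i u ∧ (∀ y ∈ Y, ∀ p < (cyclicReduce y).length,
    ((cyclicReduce y)[p]? = some (i, true) → CycFoll (cyclicReduce y) p u) ∧
    ((cyclicReduce y)[p]? = some (i, false) → CycPrec (cyclicReduce y) p (winv u))) ∧
  ∀ y ∈ Y, Disjoint (LOcc i (wL i Y).length (cyclicReduce y)) (ROcc i u.length (cyclicReduce y))

open scoped Classical in
/-- The word `w_R(Y)`. -/
noncomputable def wR {n : ℕ} (i : Fin n) (Y : List (Wrd n)) : Wrd n :=
  if h : ∃ u, IsFolWord i Y u ∧ ∀ u', IsFolWord i Y u' → u'.length ≤ u.length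
  then h.choose else []

/-- The auxiliary automorphism `α'` sending `a_i` to `w_L⁻¹ a_i w_R⁻¹`. -/
noncomputable def alphaP {n : ℕ} (i : Fin n) (Y : List (Wrd n)) :
    FreeGroup (Fin n) →* FreeGroup (Fin n) :=
  FreeGroup.lift fun j => if j = i then
    (FreeGroup.mk (wL i Y))⁻¹ * FreeGroup.of i * (FreeGroup.mk (wR i Y))⁻¹
  else FreeGroup.of j

/-- The cyclic reduction of `α'(y)` written as a reduced word. -/
noncomputable def apWord {n : ℕ} (i : Fin n) (Y : List (Wrd n)) (y : Wrd n) : Wrd n :=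
  cyclicReduce (FreeGroup.toWord (alphaP i Y (FreeGroup.mk y)))

/-- In `α' Y`, every maximal power of `a_i` either occurs by itself as an element, or is
    cyclically conjugated by `u`. -/
def IsConjWord {n : ℕ} (i : Fin n) (Y : List (Wrd n)) (u : Wrd n) : Prop :=
  Avoids i u ∧ ∀ y ∈ Y,
    (∀ c ∈ apWord i Y y, c.1 = i) ∨
    ∀ p < (apWord i Y y).length,
      (apWord i Y y)[p]?.map Prod.fst = some i →
        (((apWord i Y y)[(p + (apWord i Y y).length - 1) % (apWord i Y y).length]?.map
            Prod.fst ≠ some i → CycPrec (apWord i Y y) p (winv u)) ∧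
         ((apWord i Y y)[(p + 1) % (apWord i Y y).length]?.map Prod.fst ≠ some i →
            CycFoll (apWord i Y y) p u))

open scoped Classical in
/-- The word `w_C(Y)` (trivial when every maximal power of `a_i` occurs by itself,
    since then there is no longest conjugating word). -/
noncomputable def wC {n : ℕ} (i : Fin n) (Y : List (Wrd n)) : Wrd n :=
  if h : ∃ u, IsConjWord i Y u ∧ ∀ u', IsConjWord i Y u' → u'.length ≤ u.length
  then h.choose else []

/-- The automorphism `α_Y` sending `a_i` to `w_L⁻¹ w_C a_i w_C⁻¹ w_R⁻¹`. -/
noncomputable def alphaFG {n : ℕ} (i : Fin n) (Y : List (Wrd n)) :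
    FreeGroup (Fin n) →* FreeGroup (Fin n) :=
  FreeGroup.lift fun j => if j = i then
    (FreeGroup.mk (wL i Y))⁻¹ * FreeGroup.mk (wC i Y) * FreeGroup.of i *
      (FreeGroup.mk (wC i Y))⁻¹ * (FreeGroup.mk (wR i Y))⁻¹
  else FreeGroup.of j

/-- `u` is an `i`-chunk of `g`: a maximal cyclic subword of the cyclic reduction of `g`
    containing no `a_i^{±1}`. -/
def IsIChunk {n : ℕ} (i : Fin n) (g : FreeGroup (Fin n)) (u : Wrd n) : Prop :=
  Avoids i u ∧
    ((∃ p < (cyclicReduce g.toWord).length,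
        (cyclicReduce g.toWord)[p]?.map Prod.fst = some i ∧
        u <+: (cyclicReduce g.toWord ++ cyclicReduce g.toWord).drop (p + 1) ∧
        ((cyclicReduce g.toWord ++ cyclicReduce g.toWord).drop (p + 1 + u.length)).head?.map
          Prod.fst = some i) ∨
     (Avoids i (cyclicReduce g.toWord) ∧ ∃ p ≤ (cyclicReduce g.toWord).length,
        u = (cyclicReduce g.toWord).drop p ++ (cyclicReduce g.toWord).take p))

/-- `k(Y)`: the maximal conjugate reduced `i`-length of an `i`-chunk of `α_Y y`, `y ∈ Y`. -/
noncomputable def kLen {n : ℕ} (i : Fin n) (Y : List (Wrd n)) : ℕ :=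
  sSup {c | ∃ y ∈ Y, ∃ u, IsIChunk i (alphaFG i Y (FreeGroup.mk y)) u ∧ c = crLen i u}

/-- The full `i`-length `|Y|_i = k(Y) + |w_R(Y) w_L(Y)|_i^cr` of a set of reduced words. -/
noncomputable def fullLen {n : ℕ} (i : Fin n) (Y : List (Wrd n)) : ℕ :=
  kLen i Y + crLen i (wR i Y ++ wL i Y)

/-- `x` is an (ordered) basis of the free group: it freely generates, i.e. the induced
    endomorphism of the free group is bijective. -/
def IsBasis {n : ℕ} (x : Fin n → FreeGroup (Fin n)) : Prop :=
  Function.Bijective (FreeGroup.lift x)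

/-- A basis of `F_n` given by reduced words over the standard basis. -/
def IsWordBasis {n : ℕ} (x : Fin n → Wrd n) : Prop :=
  (∀ j, Reduced (x j)) ∧ IsBasis fun j => FreeGroup.mk (x j)

/-- `(A, B)` is a free factorization of `G` into two nontrivial free factors. -/
def IsFacPair {G : Type*} [Group G] (A B : Subgroup G) : Prop :=
  A ≠ ⊥ ∧ B ≠ ⊥ ∧ Function.Bijective (Monoid.Coprod.lift A.subtype B.subtype)

/-- `(P, Q, R)` is a free factorization of `G` into three nontrivial free factors. -/
def IsFac3 {G : Type*} [Group G] (P Q R : Subgroup G) : Prop :=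
  P ≠ ⊥ ∧ Q ≠ ⊥ ∧ R ≠ ⊥ ∧
    Function.Bijective (Monoid.CoprodI.lift fun j : Fin 3 => (![P, Q, R] j).subtype)

/-- The conjugate of a subgroup. -/
def conjSub {G : Type*} [Group G] (g : G) (H : Subgroup G) : Subgroup G :=
  H.map (MulAut.conj g).toMonoidHom

/-- Two (ordered) pairs of subgroups determine the same vertex: they agree up to
    conjugation and swapping the factors. -/
def FacRel {G : Type*} [Group G] (p q : Subgroup G × Subgroup G) : Prop :=
  ∃ g : G, (q.1 = conjSub g p.1 ∧ q.2 = conjSub g p.2) ∨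
           (q.1 = conjSub g p.2 ∧ q.2 = conjSub g p.1)

/-- Vertices of the edge splitting graph: pairs of subgroups up to conjugation and swap. -/
abbrev ESV (n : ℕ) := Quot (@FacRel (FreeGroup (Fin n)) _)

/-- The vertex of the edge splitting graph represented by the pair `(A, B)`. -/
def esv {n : ℕ} (A B : Subgroup (FreeGroup (Fin n))) : ESV n := Quot.mk _ (A, B)

/-- The factorization `p` is refined by the factorization `q` via a common refinement
    `P * Q * R` into three nontrivial free factors: `p = (P*Q, R)` and `q = (P, Q*R)`. -/
def Refines {G : Type*} [Group G] (p q : Subgroup G × Subgroup G) : Prop :=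
  ∃ P Q R : Subgroup G, IsFac3 P Q R ∧ p.1 = P ⊔ Q ∧ p.2 = R ∧ q.1 = P ∧ q.2 = Q ⊔ R

/-- The edge splitting graph `ES(n)`: two distinct vertices are adjacent if they admit
    representatives with a common refinement into three nontrivial free factors. -/
def ESGraph (n : ℕ) : SimpleGraph (ESV n) where
  Adj X Y := X ≠ Y ∧ ∃ p q, Quot.mk _ p = X ∧ Quot.mk _ q = Y ∧ (Refines p q ∨ Refines q p)
  symm := ⟨by
    rintro X Y ⟨hne, p, q, hp, hq, h⟩
    exact ⟨hne.symm, q, p, hq, hp, h.symm⟩⟩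
  loopless := ⟨fun X h => h.1 rfl⟩

/-- Nested families of canceling pairs:  `Fam w gs f` holds iff `w` carries a nested family
    `F` of `f` canceling pairs whose family of (possibly empty) maximal subwords disjoint
    from the pairs is `gs`. -/
inductive Fam {n : ℕ} : Wrd n → List (Wrd n) → ℕ → Prop
  | gap (g : Wrd n) : Fam g [g] 0
  | cons (g u w rest : Wrd n) (gs₁ gs₂ : List (Wrd n)) (f₁ f₂ : ℕ) :
      u ≠ [] → Fam w gs₁ f₁ → Fam rest gs₂ f₂ →
      Fam (g ++ u ++ w ++ winv u ++ rest) (g :: (gs₁ ++ gs₂)) (f₁ + f₂ + 1)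

theorem _root_.List.zip_tail_sublist_cons {α : Type*} (a : α) (l : List α) :
    (l.zip l.tail).Sublist ((a :: l).zip (a :: l).tail) := by
  cases l with
  | nil => simp
  | cons b l => exact (List.Sublist.refl _).cons _

theorem _root_.List.IsPrefix.zip_tail {α : Type*} {l₁ l₂ : List α} (h : l₁ <+: l₂) :
    l₁.zip l₁.tail <+: l₂.zip l₂.tail := by
  obtain ⟨t, rfl⟩ := h
  induction l₁ with
  | nil => simp
  | cons a l ih =>
    cases l with
    | nil => simp
    | cons b l => simpa using ih

theorem _root_.List.IsInfix.zip_tail_sublist {α : Type*} {l₁ l₂ : List α} (h : l₁ <:+: l₂) :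
    (l₁.zip l₁.tail).Sublist (l₂.zip l₂.tail) := by
  obtain ⟨s, t, rfl⟩ := h
  induction s with
  | nil => simpa using (List.prefix_append l₁ t).zip_tail.sublist
  | cons a s ih => exact ih.trans (List.zip_tail_sublist_cons a _)

theorem _root_.SimpleGraph.Subgraph.comap_sup {V W : Type*} {G : SimpleGraph V}
    {G' : SimpleGraph W} (f : G →g G') (H₁ H₂ : G'.Subgraph) :
    (H₁ ⊔ H₂).comap f = H₁.comap f ⊔ H₂.comap f := by
  ext <;> simp [and_or_left]

theorem HasCutVertex.of_le {V : Type*} {G G' : SimpleGraph V} (hle : G ≤ G')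
    (h : HasCutVertex G') : HasCutVertex G := by
  obtain ⟨v, H₁, H₂, hsup, hint, h₁, h₂⟩ := h
  let f := SimpleGraph.Hom.ofLE hle
  refine ⟨v, H₁.comap f, H₂.comap f, ?_, ?_, ?_, ?_⟩
  · rw [← SimpleGraph.Subgraph.comap_sup, hsup, SimpleGraph.Subgraph.comap_equiv_top]
  all_goals simpa [f]

theorem _root_.List.exists_flatten_eq_append_flatten_append {α : Type*} (b a : List α)
    {M : List (List α)} (hM : M ≠ []) :
    ∃ M' : List (List α), M'.length = M.length ∧ M'.flatten = b ++ M.flatten ++ a ∧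
      ∀ r ∈ M', ∃ m ∈ M, m <:+: r := by
  induction M generalizing b with
  | nil => exact absurd rfl hM
  | cons m ms ih =>
    rcases eq_or_ne ms [] with rfl | hms
    · exact ⟨[b ++ m ++ a], rfl, by simp, by simp⟩
    · obtain ⟨M', hlen, hflat, hM'⟩ := ih [] hms
      refine ⟨(b ++ m) :: M', by simp [hlen], by simp [hflat], ?_⟩
      rintro r (_ | ⟨_, hr⟩)
      · exact ⟨m, by simp, ⟨b, [], by simp⟩⟩
      · obtain ⟨m', hm', hinf⟩ := hM' r hr
        exact ⟨m', List.mem_cons_of_mem _ hm', hinf⟩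

theorem _root_.List.exists_flatten_eq_append_swap {α : Type*} {ps : List (List α)}
    {p q : List α} (h : ps.flatten = p ++ q) (hps : 2 ≤ ps.length) :
    ∃ M : List (List α), ps.length ≤ M.length + 1 ∧ M.flatten = q ++ p ∧
      ∀ r ∈ M, ∃ m ∈ ps, m <:+: r := by
  rcases List.flatten_eq_append_iff.mp h with ⟨as, bs, rfl, rfl, rfl⟩ |
    ⟨as, bs, c, cs, ds, rfl, rfl, rfl⟩
  · refine ⟨bs ++ as, by simp only [List.length_append]; omega, by simp, fun r hr => ⟨r, ?_, List.infix_refl r⟩⟩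
    simp only [List.mem_append] at hr ⊢
    tauto
  · have hM : ds ++ as ≠ [] := by
      intro hnil
      simp_all
    obtain ⟨M, hlen, hflat, hM⟩ := List.exists_flatten_eq_append_flatten_append (c :: cs) bs hM
    refine ⟨M, by simp [hlen]; omega, by simp [hflat], fun r hr => ?_⟩
    obtain ⟨m, hm, hinf⟩ := hM r hr
    refine ⟨m, ?_, hinf⟩
    simp only [List.mem_append, List.mem_cons] at hm ⊢
    tauto

section SimpleLen

variable {n : ℕ} {i : Fin n}

def IsSimplePiece (i : Fin n) (w : Wrd n) : Prop :=
  w ≠ [] ∧ ¬ HasCutVertex (WGraph i w)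

theorem wGraph_le_of_infix {u w : Wrd n} (h : u <:+: w) : WGraph i u ≤ WGraph i w :=
  fun _ _ ⟨hne, p, hp, hpq⟩ => ⟨hne, p, h.zip_tail_sublist.subset hp, hpq⟩

theorem IsSimplePiece.of_infix {u w : Wrd n} (hu : IsSimplePiece i u) (h : u <:+: w) :
    IsSimplePiece i w :=
  ⟨fun hw => hu.1 (List.eq_nil_of_infix_nil (hw ▸ h)),
    fun hcut => hu.2 (hcut.of_le (wGraph_le_of_infix h))⟩

theorem bddAbove_simpleLen (w : Wrd n) :
    BddAbove {t | ∃ ps : List (Wrd n), ps.length = t ∧ ps.flatten = w ∧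
      ∀ p ∈ ps, IsSimplePiece i p} := by
  refine ⟨w.length, ?_⟩
  rintro _ ⟨ps, rfl, rfl, hps⟩
  rw [List.length_flatten, ← List.length_map (f := List.length)]
  refine List.length_le_sum_of_one_le _ fun k hk => ?_
  obtain ⟨p, hp, rfl⟩ := List.mem_map.mp hk
  exact List.length_pos_iff.mpr (hps p hp).1

theorem length_le_simpleLen {ps : List (Wrd n)} (hps : ∀ p ∈ ps, IsSimplePiece i p) :
    ps.length ≤ simpleLen i ps.flatten :=
  le_csSup (bddAbove_simpleLen _) ⟨ps, rfl, rfl, hps⟩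

theorem exists_length_eq_simpleLen {w : Wrd n} (h : simpleLen i w ≠ 0) :
    ∃ ps : List (Wrd n), ps.length = simpleLen i w ∧ ps.flatten = w ∧
      ∀ p ∈ ps, IsSimplePiece i p := by
  refine Nat.sSup_mem ?_ (bddAbove_simpleLen w)
  by_contra hempty
  exact h ((congrArg sSup (Set.not_nonempty_iff_eq_empty.mp hempty)).trans csSup_empty)

theorem simpleLen_append_le_swap_add_one (p q : Wrd n) :
    simpleLen i (p ++ q) ≤ simpleLen i (q ++ p) + 1 := by
  by_cases hle : simpleLen i (p ++ q) ≤ 1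
  · omega
  obtain ⟨ps, hlen, hflat, hps⟩ := exists_length_eq_simpleLen (i := i) (w := p ++ q) (by omega)
  obtain ⟨M, hMlen, hMflat, hM⟩ := List.exists_flatten_eq_append_swap hflat (by omega)
  have hMle := length_le_simpleLen (i := i) (ps := M) fun r hr =>
    let ⟨m, hm, hmr⟩ := hM r hr
    (hps m hm).of_infix hmr
  rw [hMflat] at hMle
  omega

end SimpleLen

theorem statement3_general (n : ℕ) (i : Fin n) (p q : Wrd n) :
    (simpleLen i (p ++ q) : ℤ) - 1 ≤ simpleLen i (q ++ p) ∧
      (simpleLen i (q ++ p) : ℤ) ≤ simpleLen i (p ++ q) + 1 := by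
  have h₁ := simpleLen_append_le_swap_add_one (i := i) p q
  have h₂ := simpleLen_append_le_swap_add_one (i := i) q p
  omega

/-- simple `i`-length changes by at most 1 under cyclic conjugation. -/
theorem statement3 (n : ℕ) (hn : 2 < n) (i : Fin n) (p q : Wrd n)
    (hcr : CyclicallyReduced (p ++ q)) (hav : Avoids i (p ++ q)) :
    (simpleLen i (p ++ q) : ℤ) - 1 ≤ simpleLen i (q ++ p) ∧
      (simpleLen i (q ++ p) : ℤ) ≤ simpleLen i (p ++ q) + 1 :=
  statement3_general n i p q

end ESPaper
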